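/- Let G be a simple graph on n vertices with maximum degree at most d, where d ≥ 2 and n ≥ 2, and let (B_v) be a family of measurable events, one per vertex, in a probability space. Suppose that P(B_v) ≤ 1/(8d³) for every vertex v, and that for every vertex set W whose pairwise G-distances are all at least 3 one has P(⋂_{v∈W} B_v) ≤ ∏_{v∈W} P(B_v). Then with probability at least 1 − 1/n, every vertex set S such that the subgraph of G induced on S is connected and B_v occurs for every v ∈ S has size at most d³·(2·log₂ n + 1). -/

import Mathlib

/-!
Let `t = ⌈2 log₂ n⌉`. Call two vertices of `G` linked when their distance is exactly `3`. A
connected set `S` on which all events occur and with `|S| > d³ (2 log₂ n + 1) ≥ t (1 + d + d²)`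
contains `t + 1` vertices that are pairwise at distance at least `3` and whose link graph is
connected: grow such a set greedily, since its `2`-neighbourhood has at most `1 + d + d²` vertices
per member, and a walk in `S` leaving that neighbourhood first does so at a vertex linked to the
set.
The link graph has maximum degree at most `d³`, so by the Catalan recursion for rooted subtrees
there are at most `n · 4ᵗ · d³ᵗ` such sets, and each has probability at most `(8d³)^-(t+1)` by
negative correlation. The union bound gives `n · 4ᵗ d³ᵗ (8d³)^-(t+1) ≤ n / 2ᵗ ≤ 1 / n`.
-/

open MeasureTheory
open scoped ENNReal

open Finset

lemma measure_biUnion_biInter_le {ι Ω : Type*} [MeasurableSpace Ω] (μ : Measure Ω)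
    (B : ι → Set Ω) (𝒯 : Finset (Finset ι)) {k : ℕ} {q : ℝ≥0∞} (hcard : ∀ T ∈ 𝒯, #T = k)
    (hindep : ∀ T ∈ 𝒯, μ (⋂ i ∈ T, B i) ≤ ∏ i ∈ T, μ (B i)) (hq : ∀ i, μ (B i) ≤ q) :
    μ (⋃ T ∈ 𝒯, ⋂ i ∈ T, B i) ≤ #𝒯 * q ^ k :=
  calc μ (⋃ T ∈ 𝒯, ⋂ i ∈ T, B i) ≤ ∑ T ∈ 𝒯, μ (⋂ i ∈ T, B i) := measure_biUnion_finset_le _ _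
    _ ≤ ∑ T ∈ 𝒯, q ^ k := sum_le_sum fun T hT =>
        (hindep T hT).trans <| (prod_le_prod' fun i _ => hq i).trans_eq <| by
          rw [prod_const, hcard T hT]
    _ = #𝒯 * q ^ k := by rw [sum_const, nsmul_eq_mul]

lemma ENNReal.natCast_mul_one_div_pow_le {a b N k : ℕ} (hN : N ≠ 0) (h : a * b ≤ N ^ k) :
    (a : ℝ≥0∞) * (1 / N) ^ k ≤ 1 / b := by
  rw [ENNReal.le_div_iff_mul_le (Or.inr one_ne_zero) (Or.inl (ENNReal.natCast_ne_top b))]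
  calc (a : ℝ≥0∞) * (1 / N) ^ k * b = ((a * b : ℕ) : ℝ≥0∞) * ((N ^ k : ℕ) : ℝ≥0∞)⁻¹ := by
        rw [one_div, ← ENNReal.inv_pow]; push_cast; ring
    _ ≤ ((N ^ k : ℕ) : ℝ≥0∞) * ((N ^ k : ℕ) : ℝ≥0∞)⁻¹ := by gcongr
    _ = 1 := ENNReal.mul_inv_cancel (by simp [hN]) (ENNReal.natCast_ne_top _)

lemma catalan_le_four_pow (n : ℕ) : catalan n ≤ 4 ^ n :=
  calc catalan n ≤ (n + 1) * catalan n := Nat.le_mul_of_pos_left _ n.succ_pos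
    _ = n.centralBinom := succ_mul_catalan_eq_centralBinom n
    _ ≤ 4 ^ n := Nat.centralBinom_le_four_pow n

lemma mul_catalan_mul_pow_mul_le {n t D : ℕ} (hn : n ^ 2 ≤ 2 ^ t) (hD : 1 ≤ D) :
    n * (catalan t * D ^ t) * n ≤ (8 * D) ^ (t + 1) :=
  calc n * (catalan t * D ^ t) * n = n ^ 2 * catalan t * D ^ t := by ring
    _ ≤ 2 ^ t * 4 ^ t * D ^ t := by gcongr; exact catalan_le_four_pow t
    _ = (8 * D) ^ t := by rw [← mul_pow, ← mul_pow]; norm_num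
    _ ≤ (8 * D) ^ (t + 1) := Nat.pow_le_pow_right (by omega) t.le_succ

lemma logb_two_natCast_nonneg (n : ℕ) : 0 ≤ Real.logb 2 n := by
  rcases Nat.eq_zero_or_pos n with rfl | hn
  · simp
  exact Real.logb_nonneg one_lt_two (by exact_mod_cast hn)

lemma sq_le_two_pow_ceil_two_mul_logb (n : ℕ) : n ^ 2 ≤ 2 ^ ⌈2 * Real.logb 2 n⌉₊ := by
  rcases Nat.eq_zero_or_pos n with rfl | hn
  · simp
  have : (n : ℝ) ^ 2 = 2 ^ (2 * Real.logb 2 n) := by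
    rw [mul_comm, Real.rpow_mul zero_le_two, Real.rpow_logb two_pos (by norm_num) (by positivity)]
    norm_cast
  exact_mod_cast this.trans_le <|
    (Real.rpow_le_rpow_of_exponent_le one_le_two (Nat.le_ceil _)).trans_eq (Real.rpow_natCast _ _)

lemma natCeil_mul_lt_of_pow_three_mul_lt {x : ℝ} {d s : ℕ} (hx : 0 ≤ x) (hd : 2 ≤ d)
    (h : (d : ℝ) ^ 3 * (x + 1) < s) : ⌈x⌉₊ * (1 + d + d ^ 2) < s := by
  have hd3 : ((1 + d + d ^ 2 : ℕ) : ℝ) ≤ (d : ℝ) ^ 3 := by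
    have : 1 + d + d ^ 2 ≤ d ^ 3 := by nlinarith
    exact_mod_cast this
  have hceil : (⌈x⌉₊ : ℝ) ≤ x + 1 := (Nat.ceil_lt_add_one hx).le
  have : ((⌈x⌉₊ * (1 + d + d ^ 2) : ℕ) : ℝ) < s :=
    calc ((⌈x⌉₊ * (1 + d + d ^ 2) : ℕ) : ℝ) ≤ (x + 1) * (d : ℝ) ^ 3 := by
          rw [Nat.cast_mul]; gcongr
      _ < s := by linarith
  exact_mod_cast this

namespace SimpleGraph

variable {V : Type*} {G : SimpleGraph V}

lemma exists_adj_edist_eq_of_edist_eq_succ {c u : V} {k : ℕ} (h : G.edist c u = ↑(k + 1)) :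
    ∃ w, G.edist c w = k ∧ G.Adj w u := by
  obtain ⟨p, hp⟩ := exists_walk_of_edist_eq_coe h
  have hnil : ¬ p.Nil := by simp [← Walk.length_eq_zero_iff, hp]
  have hadj := p.adj_penultimate hnil
  refine ⟨p.penultimate, le_antisymm ?_ ?_, hadj⟩
  · simpa [hp] using p.dropLast.edist_le
  · have := h ▸ G.edist_triangle (u := c) (v := p.penultimate) (w := u)
    rw [edist_eq_one_iff_adj.2 hadj, Nat.cast_succ] at this
    exact (ENat.add_le_add_iff_right ENat.one_ne_top).1 this

def edistEqGraph (G : SimpleGraph V) (k : ℕ) : SimpleGraph V where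
  Adj u v := u ≠ v ∧ G.edist u v = k
  symm := ⟨fun _ _ h => ⟨h.1.symm, G.edist_comm ▸ h.2⟩⟩
  loopless := ⟨fun _ h => h.1 rfl⟩

@[simp]
lemma edistEqGraph_adj {k : ℕ} {u v : V} :
    (G.edistEqGraph k).Adj u v ↔ u ≠ v ∧ G.edist u v = k :=
  Iff.rfl

section Degree

variable [Fintype V] [DecidableRel G.Adj] {d : ℕ}

lemma card_le_pow_of_forall_edist_eq (hdeg : ∀ v, G.degree v ≤ d) (c : V) :
    ∀ (k : ℕ) (A : Finset V), (∀ u ∈ A, G.edist c u = k) → #A ≤ d ^ k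
  | 0, A, hA => by
    simpa using card_le_one.2 fun u hu v hv =>
      (edist_eq_zero_iff.1 (hA u hu)).symm.trans (edist_eq_zero_iff.1 (hA v hv))
  | k + 1, A, hA => by
    classical
    choose! w hw using fun u hu => exists_adj_edist_eq_of_edist_eq_succ (hA u hu)
    calc #A ≤ #((A.image w).biUnion fun x => G.neighborFinset x) := card_le_card fun u hu =>
          mem_biUnion.2 ⟨w u, mem_image_of_mem w hu, (G.mem_neighborFinset _ _).2 (hw u hu).2⟩
      _ ≤ #(A.image w) * d := card_biUnion_le_card_mul _ _ _ fun x _ => hdeg x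
      _ ≤ d ^ k * d := Nat.mul_le_mul_right _ <| card_le_pow_of_forall_edist_eq hdeg c k _ <| by
          simpa using fun u hu => (hw u hu).1
      _ = d ^ (k + 1) := (pow_succ d k).symm

lemma card_le_sum_pow_of_forall_edist_le (hdeg : ∀ v, G.degree v ≤ d) (c : V) (k : ℕ)
    (A : Finset V) (hA : ∀ u ∈ A, G.edist c u ≤ k) : #A ≤ ∑ i ∈ range (k + 1), d ^ i := by
  classical
  calc #A ≤ #((range (k + 1)).biUnion fun i => A.filter (G.edist c · = i)) :=
        card_le_card fun u hu => by
          obtain ⟨i, hi, hik⟩ := ENat.le_natCast_iff.1 (hA u hu)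
          exact mem_biUnion.2 ⟨i, mem_range.2 (by omega), mem_filter.2 ⟨hu, hi⟩⟩
    _ ≤ ∑ i ∈ range (k + 1), #(A.filter (G.edist c · = i)) := card_biUnion_le
    _ ≤ _ := sum_le_sum fun i _ =>
        card_le_pow_of_forall_edist_eq hdeg c i _ fun u hu => (mem_filter.1 hu).2

lemma card_le_card_mul_of_forall_exists_edist_le (hdeg : ∀ v, G.degree v ≤ d) (k : ℕ)
    {S T : Finset V} (h : ∀ s ∈ S, ∃ x ∈ T, G.edist x s ≤ k) :
    #S ≤ #T * ∑ i ∈ range (k + 1), d ^ i := by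
  classical
  calc #S ≤ #(T.biUnion fun x => S.filter (G.edist x · ≤ k)) := card_le_card fun s hs => by
        obtain ⟨x, hx, hxs⟩ := h s hs
        exact mem_biUnion.2 ⟨x, hx, mem_filter.2 ⟨hs, hxs⟩⟩
    _ ≤ _ := card_biUnion_le_card_mul _ _ _ fun x _ =>
        card_le_sum_pow_of_forall_edist_le hdeg x k _ fun u hu => (mem_filter.1 hu).2

lemma degree_edistEqGraph_le (hdeg : ∀ v, G.degree v ≤ d) (k : ℕ)
    [DecidableRel (G.edistEqGraph k).Adj] (v : V) : (G.edistEqGraph k).degree v ≤ d ^ k :=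
  card_le_pow_of_forall_edist_eq hdeg v k _ fun _ hu =>
    (edistEqGraph_adj.1 ((mem_neighborFinset _ _ _).1 hu)).2

end Degree

variable [DecidableEq V]

/-- `T` is the vertex set of a subtree of `H` containing `v`, presented as the root `v` with rooted
subtrees grafted below it one child at a time: the decomposition behind the Catalan recursion. -/
inductive IsRootedTree (H : SimpleGraph V) : V → Finset V → Prop
  | singleton (v : V) : IsRootedTree H v {v}
  | graft {v c : V} {A R : Finset V} : H.Adj v c → IsRootedTree H c A → IsRootedTree H v R →
      Disjoint A R → IsRootedTree H v (A ∪ R)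

namespace IsRootedTree

variable {H : SimpleGraph V} {v : V} {T : Finset V}

lemma root_mem (h : IsRootedTree H v T) : v ∈ T := by
  induction h with
  | singleton v => exact mem_singleton_self v
  | graft _ _ _ _ _ ihR => exact mem_union_right _ ihR

lemma insert (h : IsRootedTree H v T) {x y : V} (hx : x ∈ T) (hxy : H.Adj x y) (hy : y ∉ T) :
    IsRootedTree H v (insert y T) := by
  induction h with
  | singleton v =>
    obtain rfl := mem_singleton.1 hx
    rw [Finset.insert_eq]
    exact graft hxy (singleton y) (singleton x) (disjoint_singleton.2 hxy.ne.symm)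
  | graft hvc hA hR hAR ihA ihR =>
    rw [mem_union, not_or] at *
    rcases hx with hx | hx
    · rw [← Finset.insert_union]
      exact graft hvc (ihA hx hy.1) hR (disjoint_insert_left.2 ⟨hy.2, hAR⟩)
    · rw [← Finset.union_insert]
      exact graft hvc hA (ihR hx hy.2) (disjoint_insert_right.2 ⟨hy.1, hAR⟩)

end IsRootedTree

variable [Fintype V]

open Classical in
noncomputable def rootedTrees (H : SimpleGraph V) (v : V) (k : ℕ) : Finset (Finset V) :=
  univ.filter fun T => #T = k ∧ IsRootedTree H v T

section Counting

variable {H : SimpleGraph V}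

@[simp]
lemma mem_rootedTrees {v : V} {k : ℕ} {T : Finset V} :
    T ∈ H.rootedTrees v k ↔ #T = k ∧ IsRootedTree H v T := by
  simp [rootedTrees]

lemma rootedTrees_add_two_subset [DecidableRel H.Adj] (v : V) (m : ℕ) :
    H.rootedTrees v (m + 2) ⊆
      ((antidiagonal m).sigma fun ij => (H.neighborFinset v).sigma fun c =>
        H.rootedTrees c (ij.1 + 1) ×ˢ H.rootedTrees v (ij.2 + 1)).image
        fun x => x.2.2.1 ∪ x.2.2.2 := by
  intro T hT
  obtain ⟨hcard, hT⟩ := mem_rootedTrees.1 hT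
  cases hT with
  | singleton => simp at hcard
  | @graft _ c A R hvc hA hR hAR =>
    rw [card_union_of_disjoint hAR] at hcard
    have hApos := card_pos.2 ⟨_, hA.root_mem⟩
    have hRpos := card_pos.2 ⟨_, hR.root_mem⟩
    refine mem_image.2 ⟨⟨(#A - 1, #R - 1), c, A, R⟩, ?_, rfl⟩
    simp only [mem_sigma, HasAntidiagonal.mem_antidiagonal, mem_neighborFinset, mem_product,
      mem_rootedTrees]
    exact ⟨by omega, hvc, ⟨by omega, hA⟩, by omega, hR⟩

theorem card_rootedTrees_le [DecidableRel H.Adj] {D : ℕ} (hD : ∀ v, H.degree v ≤ D) (k : ℕ)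
    (v : V) : #(H.rootedTrees v (k + 1)) ≤ catalan k * D ^ k := by
  induction k using Nat.strong_induction_on generalizing v with
  | _ k ih =>
  rcases k with _ | m
  · simpa using card_le_one.2 fun T hT T' hT' => by
      rw [mem_rootedTrees, card_eq_one] at hT hT'
      obtain ⟨⟨a, rfl⟩, ha⟩ := hT
      obtain ⟨⟨b, rfl⟩, hb⟩ := hT'
      rw [← mem_singleton.1 ha.root_mem, ← mem_singleton.1 hb.root_mem]
  calc #(H.rootedTrees v (m + 2))
      ≤ ∑ ij ∈ antidiagonal m, ∑ c ∈ H.neighborFinset v,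
          #(H.rootedTrees c (ij.1 + 1)) * #(H.rootedTrees v (ij.2 + 1)) := by
        refine (card_le_card (rootedTrees_add_two_subset v m)).trans (card_image_le.trans ?_)
        simp [card_sigma, card_product]
    _ ≤ ∑ ij ∈ antidiagonal m, ∑ _c ∈ H.neighborFinset v,
          catalan ij.1 * D ^ ij.1 * (catalan ij.2 * D ^ ij.2) := by
        gcongr with ij hij
        all_goals exact ih _ (by have := HasAntidiagonal.mem_antidiagonal.1 hij; omega) _
    _ ≤ ∑ ij ∈ antidiagonal m, D * (catalan ij.1 * D ^ ij.1 * (catalan ij.2 * D ^ ij.2)) := by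
        gcongr
        rw [sum_const, smul_eq_mul]
        exact Nat.mul_le_mul_right _ (hD v)
    _ = ∑ ij ∈ antidiagonal m, catalan ij.1 * catalan ij.2 * D ^ (m + 1) :=
        sum_congr rfl fun ij hij => by rw [← HasAntidiagonal.mem_antidiagonal.1 hij]; ring
    _ = catalan (m + 1) * D ^ (m + 1) := by rw [← sum_mul, catalan_succ']

end Counting

open Classical in
noncomputable def separatedTrees (G : SimpleGraph V) (k : ℕ) : Finset (Finset V) :=
  (univ.biUnion fun v => (G.edistEqGraph 3).rootedTrees v k).filter
    fun T => (T : Set V).Pairwise (3 ≤ G.edist · ·)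

lemma mem_separatedTrees {k : ℕ} {T : Finset V} : T ∈ G.separatedTrees k ↔
    #T = k ∧ (T : Set V).Pairwise (3 ≤ G.edist · ·) ∧
      ∃ v, IsRootedTree (G.edistEqGraph 3) v T := by
  simp only [separatedTrees, mem_filter, mem_biUnion, mem_univ, true_and, mem_rootedTrees]
  grind

section SeparatedTrees

variable [DecidableRel G.Adj] {d : ℕ}

lemma card_separatedTrees_le (hdeg : ∀ v, G.degree v ≤ d) (t : ℕ) :
    #(G.separatedTrees (t + 1)) ≤ Fintype.card V * (catalan t * (d ^ 3) ^ t) := by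
  classical
  calc #(G.separatedTrees (t + 1))
      ≤ ∑ v, #((G.edistEqGraph 3).rootedTrees v (t + 1)) :=
        (card_filter_le _ _).trans card_biUnion_le
    _ ≤ ∑ _v : V, catalan t * (d ^ 3) ^ t :=
        sum_le_sum fun v _ => card_rootedTrees_le (degree_edistEqGraph_le hdeg 3) t v
    _ = Fintype.card V * (catalan t * (d ^ 3) ^ t) := by rw [sum_const, card_univ, smul_eq_mul]

lemma exists_edist_eq_three_of_card_lt (hdeg : ∀ v, G.degree v ≤ d) {S T : Finset V}
    (hS : (G.induce (S : Set V)).Connected) (hTS : T ⊆ S) (hT : T.Nonempty)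
    (hcard : #T * (1 + d + d ^ 2) < #S) :
    ∃ y ∈ S, (∀ x ∈ T, 3 ≤ G.edist x y) ∧ ∃ x ∈ T, G.edist x y = 3 := by
  obtain ⟨s, hsS, hs⟩ : ∃ s ∈ S, ∀ x ∈ T, 2 < G.edist x s := by
    by_contra! h
    have := card_le_card_mul_of_forall_exists_edist_le hdeg 2 h
    simp only [sum_range_succ, sum_range_zero, pow_zero, pow_one, zero_add] at this
    omega
  obtain ⟨x₀, hx₀⟩ := hT
  obtain ⟨p⟩ := hS.preconnected ⟨x₀, hTS hx₀⟩ ⟨s, hsS⟩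
  obtain ⟨⟨⟨a, b⟩, hab⟩, -, ⟨x, hx, hxa⟩, hb⟩ :=
    p.exists_boundary_dart {y | ∃ x ∈ T, G.edist x y ≤ 2} ⟨x₀, hx₀, by simp⟩
      (by simpa using hs)
  simp only [Set.mem_ofPred_eq, not_exists, not_and, not_le] at hb
  have h3 : ∀ x ∈ T, 3 ≤ G.edist x b := fun x hx => Order.add_one_le_of_lt (hb x hx)
  refine ⟨b, b.2, h3, x, hx, le_antisymm ?_ (h3 x hx)⟩
  calc G.edist x b ≤ G.edist x a + G.edist a b := G.edist_triangle
    _ ≤ 2 + 1 := add_le_add hxa ((edist_eq_one_iff_adj (G := G)).2 hab).le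
    _ = 3 := rfl

theorem exists_mem_separatedTrees_subset (hdeg : ∀ v, G.degree v ≤ d) {S : Finset V}
    (hS : (G.induce (S : Set V)).Connected) :
    ∀ t, t * (1 + d + d ^ 2) < #S → ∃ T ∈ G.separatedTrees (t + 1), T ⊆ S
  | 0, h => by
    obtain ⟨s, hs⟩ : S.Nonempty := card_pos.1 (by omega)
    exact ⟨{s}, mem_separatedTrees.2 ⟨card_singleton s, by simp, s, .singleton s⟩,
      singleton_subset_iff.2 hs⟩
  | t + 1, h => by
    obtain ⟨T, hT, hTS⟩ :=
      exists_mem_separatedTrees_subset hdeg hS t (lt_of_le_of_lt (by gcongr; omega) h)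
    obtain ⟨hTcard, hTsep, v, hTv⟩ := mem_separatedTrees.1 hT
    obtain ⟨y, hyS, hy, x, hx, hxy⟩ :=
      exists_edist_eq_three_of_card_lt hdeg hS hTS ⟨v, hTv.root_mem⟩ (hTcard ▸ h)
    have hyT : y ∉ T := fun hyT => by simpa using hy y hyT
    refine ⟨insert y T, mem_separatedTrees.2 ⟨by rw [card_insert_of_notMem hyT, hTcard], ?_,
      v, hTv.insert hx ⟨ne_of_mem_of_not_mem hx hyT, hxy⟩ hyT⟩, insert_subset hyS hTS⟩
    rw [coe_insert, Set.pairwise_insert_of_notMem hyT]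
    exact ⟨hTsep, fun u hu => ⟨G.edist_comm ▸ hy u hu, hy u hu⟩⟩

end SeparatedTrees

end SimpleGraph

theorem prob_all_connected_surviving_small_general {V : Type*} [Fintype V] (G : SimpleGraph V)
    [DecidableRel G.Adj] (n d : ℕ) (hn : Fintype.card V = n) (hd : 2 ≤ d)
    (hdeg : ∀ v, G.degree v ≤ d)
    {Ω : Type*} [MeasurableSpace Ω] (μ : Measure Ω) [IsProbabilityMeasure μ]
    (B : V → Set Ω)
    (hp : ∀ v, μ (B v) ≤ 1 / (8 * (d : ℝ≥0∞) ^ 3))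
    (hcorr : ∀ W : Finset V, (∀ u ∈ W, ∀ v ∈ W, u ≠ v → 3 ≤ G.edist u v) →
      μ (⋂ v ∈ W, B v) ≤ ∏ v ∈ W, μ (B v)) :
    1 - 1 / (n : ℝ≥0∞) ≤
      μ {ω | ∀ S : Finset V, (G.induce (S : Set V)).Connected → (∀ v ∈ S, ω ∈ B v) →
        (S.card : ℝ) ≤ (d : ℝ) ^ 3 * (2 * Real.logb 2 n + 1)} := by
  classical
  set t := ⌈2 * Real.logb 2 n⌉₊
  set bad := ⋃ T ∈ G.separatedTrees (t + 1), ⋂ v ∈ T, B v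
  have hcount : #(G.separatedTrees (t + 1)) * n ≤ (8 * d ^ 3) ^ (t + 1) :=
    (Nat.mul_le_mul_right n (hn ▸ G.card_separatedTrees_le hdeg t)).trans <|
      mul_catalan_mul_pow_mul_le (sq_le_two_pow_ceil_two_mul_logb n) (Nat.one_le_pow _ _ (by omega))
  have hbad : μ bad ≤ 1 / n := by
    refine (measure_biUnion_biInter_le μ B _ (fun T hT => (G.mem_separatedTrees.1 hT).1)
      (fun T hT => hcorr T fun u hu v hv => (G.mem_separatedTrees.1 hT).2.1 hu hv)
      fun v => ?_).trans (ENNReal.natCast_mul_one_div_pow_le (by positivity) hcount)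
    push_cast
    exact hp v
  calc 1 - 1 / (n : ℝ≥0∞) ≤ 1 - μ bad := tsub_le_tsub_left hbad 1
    _ ≤ μ badᶜ := tsub_le_iff_left.2 (by simpa using measure_univ_le_add_compl (μ := μ) bad)
    _ ≤ _ := measure_mono fun ω hω => by
      intro S hS hSB
      by_contra! hlt
      obtain ⟨T, hT, hTS⟩ := G.exists_mem_separatedTrees_subset hdeg hS t <|
        natCeil_mul_lt_of_pow_three_mul_lt (by have := logb_two_natCast_nonneg n; positivity) hd hlt
      exact hω (Set.mem_iUnion₂.2 ⟨T, hT, Set.mem_iInter₂.2 fun u hu => hSB u (hTS hu)⟩)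

/-- Let `G` be a simple graph on `n ≥ 2` vertices with maximum degree at most `d ≥ 2`,
and `(B v)` events with `P(B v) ≤ 1/(8d³)` such that events indexed by vertices at
pairwise distance at least `3` are negatively correlated. Then with probability at
least `1 - 1/n`, every vertex set `S` inducing a connected subgraph all of whose
events occur has size at most `d³(2 log₂ n + 1)`. -/
theorem prob_all_connected_surviving_small {V : Type*} [Fintype V] (G : SimpleGraph V)
    [DecidableRel G.Adj] (n d : ℕ) (hn : Fintype.card V = n) (hn2 : 2 ≤ n) (hd : 2 ≤ d)
    (hdeg : ∀ v, G.degree v ≤ d)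
    {Ω : Type*} [MeasurableSpace Ω] (μ : Measure Ω) [IsProbabilityMeasure μ]
    (B : V → Set Ω) (hB : ∀ v, MeasurableSet (B v))
    (hp : ∀ v, μ (B v) ≤ 1 / (8 * (d : ℝ≥0∞) ^ 3))
    (hcorr : ∀ W : Finset V, (∀ u ∈ W, ∀ v ∈ W, u ≠ v → 3 ≤ G.edist u v) →
      μ (⋂ v ∈ W, B v) ≤ ∏ v ∈ W, μ (B v)) :
    1 - 1 / (n : ℝ≥0∞) ≤
      μ {ω | ∀ S : Finset V, (G.induce (S : Set V)).Connected → (∀ v ∈ S, ω ∈ B v) →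
        (S.card : ℝ) ≤ (d : ℝ) ^ 3 * (2 * Real.logb 2 n + 1)} :=
  prob_all_connected_surviving_small_general G n d hn hd hdeg μ B hp hcorr
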